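/- For the grid G = {1,...,d}^2, there exists a set B of exactly 2d − 1 points (for instance B = {(1,j) : 1 ≤ j ≤ d} ∪ {(i,1) : 2 ≤ i ≤ d}) whose discrete affine hull equals all of G. -/
import Mathlib


/-- Concatenated one-hot encoding of a pair of attributes in `{1,…,d}²`. -/
def sig2 {d : ℕ} (z : Fin d × Fin d) : Fin d ⊕ Fin d → ℝ :=
  Sum.elim (fun k => if z.1 = k then 1 else 0) (fun k => if z.2 = k then 1 else 0)

/-- Membership in the discrete affine hull of `B ⊆ {1,…,d}²`. -/
def DAff2 {d : ℕ} (B : Finset (Fin d × Fin d)) (z : Fin d × Fin d) : Prop :=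
  ∃ α : Fin d × Fin d → ℝ, ∑ w ∈ B, α w = 1 ∧ sig2 z = ∑ w ∈ B, α w • sig2 w

/-- There is a set of exactly `2d − 1` grid points whose discrete affine hull
is the whole grid `{1,…,d}²`. -/
theorem stmt12 {d : ℕ} (hd : 1 ≤ d) :
    ∃ B : Finset (Fin d × Fin d), B.card = 2 * d - 1 ∧ ∀ z, DAff2 B z := by
  haveI : NeZero d := ⟨Nat.one_le_iff_ne_zero.mp hd⟩
  set B : Finset (Fin d × Fin d) :=
    ({0} ×ˢ Finset.univ) ∪ (Finset.univ ×ˢ {0}) with hB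
  have hmem : ∀ w : Fin d × Fin d, w ∈ B ↔ w.1 = 0 ∨ w.2 = 0 := by
    intro w
    simp [hB, Finset.mem_union, Finset.mem_product, Prod.ext_iff, eq_comm]
  refine ⟨B, ?_, ?_⟩
  · have hinter : (({0} ×ˢ (Finset.univ : Finset (Fin d))) ∩
        ((Finset.univ : Finset (Fin d)) ×ˢ {0})) = {((0 : Fin d), (0 : Fin d))} := by
      ext w
      simp [Finset.mem_product, Prod.ext_iff, eq_comm]
    have h := Finset.card_union_add_card_inter
      ({0} ×ˢ (Finset.univ : Finset (Fin d)))
      ((Finset.univ : Finset (Fin d)) ×ˢ {0})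
    rw [hinter] at h
    simp only [Finset.card_product, Finset.card_singleton, Finset.card_univ,
      Fintype.card_fin, one_mul, mul_one] at h
    rw [hB]
    omega
  · intro z
    obtain ⟨a, b⟩ := z
    refine ⟨fun w => (if w = (a, 0) then 1 else 0) + (if w = (0, b) then 1 else 0)
      + (if w = ((0 : Fin d), (0 : Fin d)) then -1 else 0), ?_, ?_⟩
    · rw [Finset.sum_add_distrib, Finset.sum_add_distrib,
        Finset.sum_ite_eq' B (a, 0), Finset.sum_ite_eq' B (0, b),
        Finset.sum_ite_eq' B ((0 : Fin d), (0 : Fin d))]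
      simp [hmem]
    · funext t
      rw [Finset.sum_apply]
      simp only [Pi.smul_apply, smul_eq_mul, add_mul]
      rw [Finset.sum_add_distrib, Finset.sum_add_distrib]
      have e1 : ∀ p : Fin d × Fin d, p ∈ B →
          ∑ w ∈ B, (if w = p then (1:ℝ) else 0) * sig2 w t = sig2 p t := by
        intro p hp
        simp only [ite_mul, one_mul, zero_mul]
        rw [Finset.sum_ite_eq' B p]
        simp [hp]
      have e2 : ∑ w ∈ B, (if w = ((0:Fin d), (0:Fin d)) then (-1:ℝ) else 0) * sig2 w t
          = -sig2 ((0:Fin d), (0:Fin d)) t := by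
        simp only [ite_mul, neg_mul, one_mul, zero_mul]
        rw [Finset.sum_ite_eq' B ((0:Fin d), (0:Fin d))]
        simp [hmem]
      rw [e1 (a,0) (by simp [hmem]), e1 (0,b) (by simp [hmem]), e2]
      cases t with
      | inl k => by_cases h : a = k <;> simp [sig2, h]
      | inr k => by_cases h : b = k <;> simp [sig2, h]
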